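/- arXiv:0905.3463 — 3 statements merged into one kernel-verified Lean document; each statement's English description precedes it below -/
import Mathlib

section
/- Suppose σ_{z·x} > 0, σ_{w·x} > 0, σ_{w·zx} > 0 and σ_{z·wx} > 0. Then the t-ratio t_W admits the alternative representation t_W = df^{1/2} · σ_{wz·x} / (σ_{z·x} · σ_{w·zx}). -/
open scoped BigOperators

/-- Weighted inner product on ℝⁿ: `(A,B) := (∑ i, wᵢ Aᵢ Bᵢ) / (∑ i, wᵢ)`. -/
noncomputable def wip {n : ℕ} (w A B : Fin n → ℝ) : ℝ :=
  (∑ i, w i * A i * B i) / (∑ i, w i)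

/-- `P` is the best linear predictor (orthogonal projection with respect to the
weighted inner product `wip w`) of `A` onto the span of the collection `C`. -/
def IsBlp {n : ℕ} (w : Fin n → ℝ) (C : Set (Fin n → ℝ)) (A P : Fin n → ℝ) : Prop :=
  P ∈ Submodule.span ℝ C ∧ ∀ v ∈ Submodule.span ℝ C, wip w (A - P) v = 0

/-!
Frisch–Waugh: if `P`, `Q` are the projections of `Z`, `W` on `span X`, then the projection of
`Z` on `span (insert W X)` is `P + (σ_{wz·x}/σ²_{w·x}) • (W - Q)`, whence
`σ²_{z·wx} = σ²_{z·x} - σ_{wz·x}² / σ²_{w·x}`. By symmetry `σ²_{z·x} σ²_{w·zx}` and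
`σ²_{w·x} σ²_{z·wx}` both equal `σ²_{z·x} σ²_{w·x} - σ_{wz·x}²`, so
`σ_{z·x} σ_{w·zx} = σ_{w·x} σ_{z·wx}`, which turns one expression for `t_W` into the other.
-/

section wip

variable {n : ℕ} (w : Fin n → ℝ)

lemma wip_comm (A B : Fin n → ℝ) : wip w A B = wip w B A := by
  simp only [wip, mul_right_comm]

lemma wip_sub_left (A B C : Fin n → ℝ) : wip w (A - B) C = wip w A C - wip w B C := by
  simp only [wip, Pi.sub_apply, mul_sub, sub_mul, Finset.sum_sub_distrib, sub_div]

lemma wip_sub_right (A B C : Fin n → ℝ) : wip w A (B - C) = wip w A B - wip w A C := by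
  rw [wip_comm, wip_sub_left, wip_comm w B, wip_comm w C]

lemma wip_add_right (A B C : Fin n → ℝ) : wip w A (B + C) = wip w A B + wip w A C := by
  simp only [wip, Pi.add_apply, mul_add, Finset.sum_add_distrib, add_div]

lemma wip_smul_left (r : ℝ) (A B : Fin n → ℝ) : wip w (r • A) B = r * wip w A B := by
  simp only [wip, Pi.smul_apply, smul_eq_mul, ← mul_div_assoc, Finset.mul_sum]
  exact congrArg (· / _) (Finset.sum_congr rfl fun _ _ => by ring)

lemma wip_smul_right (r : ℝ) (A B : Fin n → ℝ) : wip w A (r • B) = r * wip w A B := by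
  rw [wip_comm, wip_smul_left, wip_comm]

end wip

namespace IsBlp

variable {n : ℕ} {w : Fin n → ℝ} {C : Set (Fin n → ℝ)} {A P Q : Fin n → ℝ}

lemma wip_residual_eq (hP : IsBlp w C A P) (hQ : IsBlp w C A Q) :
    wip w (A - P) (A - P) = wip w (A - Q) (A - Q) := by
  have hQP : Q - P ∈ Submodule.span ℝ C := Submodule.sub_mem _ hQ.1 hP.1
  have hdiff : (A - P) - (A - Q) = Q - P := by abel
  calc wip w (A - P) (A - P) = wip w (A - Q) (A - P) := by
        rw [← sub_eq_zero, ← wip_sub_left, hdiff, wip_comm, hP.2 _ hQP]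
    _ = wip w (A - Q) (A - Q) := by
        rw [wip_comm, ← sub_eq_zero, ← wip_sub_left, hdiff, wip_comm, hQ.2 _ hQP]

lemma insert_add_smul {X : Set (Fin n → ℝ)} {Z W Pzx Pwx : Fin n → ℝ}
    (hPzx : IsBlp w X Z Pzx) (hPwx : IsBlp w X W Pwx)
    (hb : wip w (W - Pwx) (W - Pwx) ≠ 0) :
    IsBlp w (insert W X) Z
      (Pzx + (wip w (W - Pwx) (Z - Pzx) / wip w (W - Pwx) (W - Pwx)) • (W - Pwx)) := by
  set β := wip w (W - Pwx) (Z - Pzx) / wip w (W - Pwx) (W - Pwx)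
  have hX : Submodule.span ℝ X ≤ Submodule.span ℝ (insert W X) :=
    Submodule.span_mono (Set.subset_insert W X)
  have hW : W ∈ Submodule.span ℝ (insert W X) := Submodule.subset_span (Set.mem_insert W X)
  have hres : Z - (Pzx + β • (W - Pwx)) = (Z - Pzx) - β • (W - Pwx) := by abel
  have horth_X : ∀ u ∈ Submodule.span ℝ X, wip w ((Z - Pzx) - β • (W - Pwx)) u = 0 := by
    intro u hu
    rw [wip_sub_left, wip_smul_left, hPzx.2 u hu, hPwx.2 u hu, mul_zero, sub_zero]
  have horth_W : wip w ((Z - Pzx) - β • (W - Pwx)) (W - Pwx) = 0 := by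
    rw [wip_sub_left, wip_smul_left, wip_comm w (Z - Pzx)]
    exact sub_eq_zero.mpr (div_mul_cancel₀ _ hb).symm
  refine ⟨Submodule.add_mem _ (hX hPzx.1) (Submodule.smul_mem _ _ (Submodule.sub_mem _ hW
    (hX hPwx.1))), fun v hv => ?_⟩
  obtain ⟨r, u, hu, rfl⟩ := Submodule.mem_span_insert.mp hv
  have hrW : r • W + u = r • (W - Pwx) + (r • Pwx + u) := by
    rw [smul_sub]; abel
  rw [hres, hrW, wip_add_right, wip_smul_right, horth_W,
    horth_X _ (Submodule.add_mem _ (Submodule.smul_mem _ _ hPwx.1) hu), mul_zero, add_zero]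

lemma wip_residual_insert {X : Set (Fin n → ℝ)} {Z W Pzx Pwx Pzwx : Fin n → ℝ}
    (hPzx : IsBlp w X Z Pzx) (hPwx : IsBlp w X W Pwx) (hPzwx : IsBlp w (insert W X) Z Pzwx)
    (hb : wip w (W - Pwx) (W - Pwx) ≠ 0) :
    wip w (Z - Pzwx) (Z - Pzwx) = wip w (Z - Pzx) (Z - Pzx)
      - wip w (W - Pwx) (Z - Pzx) ^ 2 / wip w (W - Pwx) (W - Pwx) := by
  rw [hPzwx.wip_residual_eq (hPzx.insert_add_smul hPwx hb),
    show Z - (Pzx + _ • (W - Pwx)) = (Z - Pzx) - _ • (W - Pwx) by abel]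
  generalize Z - Pzx = zr at *
  generalize W - Pwx = wr at *
  simp only [wip_sub_left, wip_sub_right, wip_smul_left, wip_smul_right,
    wip_comm w zr wr]
  field_simp
  ring

end IsBlp

theorem stmt1_general {n : ℕ} (w : Fin n → ℝ)
    (X : Set (Fin n → ℝ))
    (Z W : Fin n → ℝ)
    (Pzx Pwx Pwzx Pzwx : Fin n → ℝ)
    (hPzx : IsBlp w X Z Pzx)
    (hPwx : IsBlp w X W Pwx)
    (hPwzx : IsBlp w (insert Z X) W Pwzx)
    (hPzwx : IsBlp w (insert W X) Z Pzwx)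
    (hσzx : 0 < wip w (Z - Pzx) (Z - Pzx))
    (hσwx : 0 < wip w (W - Pwx) (W - Pwx)) :
    let df : ℝ := (n : ℝ) - (Module.finrank ℝ (Submodule.span ℝ X) : ℝ) - 1
    let σzx := Real.sqrt (wip w (Z - Pzx) (Z - Pzx))
    let σwx := Real.sqrt (wip w (W - Pwx) (W - Pwx))
    let σwzx := Real.sqrt (wip w (W - Pwzx) (W - Pwzx))
    let σzwx := Real.sqrt (wip w (Z - Pzwx) (Z - Pzwx))
    let tW := (wip w (W - Pwx) (Z - Pzx) / wip w (W - Pwx) (W - Pwx)) /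
      (σzwx / (Real.sqrt df * σwx))
    tW = Real.sqrt df * wip w (W - Pwx) (Z - Pzx) / (σzx * σwzx) := by
  intro df σzx σwx σwzx σzwx tW
  have hσzwx := hPzx.wip_residual_insert hPwx hPzwx hσwx.ne'
  have hσwzx := hPwx.wip_residual_insert hPzx hPwzx hσzx.ne'
  rw [wip_comm w (Z - Pzx)] at hσwzx
  have hσ_mul : σzx * σwzx = σwx * σzwx := by
    simp only [σzx, σwzx, σwx, σzwx, ← Real.sqrt_mul hσzx.le, ← Real.sqrt_mul hσwx.le,
      hσzwx, hσwzx]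
    congr 1
    field_simp
  have hσwx_sq : wip w (W - Pwx) (W - Pwx) = σwx * σwx := (Real.mul_self_sqrt hσwx.le).symm
  have hσwx_ne : σwx ≠ 0 := (Real.sqrt_pos.mpr hσwx).ne'
  simp only [tW, hσ_mul, div_div_eq_mul_div, hσwx_sq, mul_div_assoc, ← div_div]
  field_simp

/-- if `σ_{z·x} > 0`, `σ_{w·x} > 0`, `σ_{w·zx} > 0` and `σ_{z·wx} > 0`,
then the `t`-ratio `t_W = (σ_{wz·x}/σ²_{w·x}) / (df^{−1/2} σ_{z·wx}/σ_{w·x})` admits the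
alternative representation `t_W = df^{1/2} · σ_{wz·x} / (σ_{z·x} · σ_{w·zx})`. -/
theorem stmt1 {n : ℕ} (w : Fin n → ℝ) (hw : ∀ i, 0 < w i)
    (X : Set (Fin n → ℝ)) (hXfin : X.Finite)
    (h1 : (fun _ => (1 : ℝ)) ∈ Submodule.span ℝ X)
    (Z W : Fin n → ℝ)
    (Pzx Pwx Pwzx Pzwx : Fin n → ℝ)
    (hPzx : IsBlp w X Z Pzx)
    (hPwx : IsBlp w X W Pwx)
    (hPwzx : IsBlp w (insert Z X) W Pwzx)
    (hPzwx : IsBlp w (insert W X) Z Pzwx)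
    (hσzx : 0 < wip w (Z - Pzx) (Z - Pzx))
    (hσwx : 0 < wip w (W - Pwx) (W - Pwx))
    (hσwzx : 0 < wip w (W - Pwzx) (W - Pwzx))
    (hσzwx : 0 < wip w (Z - Pzwx) (Z - Pzwx)) :
    let df : ℝ := (n : ℝ) - (Module.finrank ℝ (Submodule.span ℝ X) : ℝ) - 1
    let σzx := Real.sqrt (wip w (Z - Pzx) (Z - Pzx))
    let σwx := Real.sqrt (wip w (W - Pwx) (W - Pwx))
    let σwzx := Real.sqrt (wip w (W - Pwzx) (W - Pwzx))
    let σzwx := Real.sqrt (wip w (Z - Pzwx) (Z - Pzwx))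
    let tW := (wip w (W - Pwx) (Z - Pzx) / wip w (W - Pwx) (W - Pwx)) /
      (σzwx / (Real.sqrt df * σwx))
    tW = Real.sqrt df * wip w (W - Pwx) (Z - Pzx) / (σzx * σwzx) :=
  stmt1_general w X Z W Pzx Pwx Pwzx Pzwx hPzx hPwx hPwzx hPzwx hσzx hσwx
end

section
/- Let d > 1 be real, q > 0, T > 0, and set f(t,d) := √(1 + (1 + t²)/(d − 1)). Suppose T²/(T² + q² f(T,d)²) < R < 1. Then the union over all t with |t| ≤ T and all ρ with ρ² ≤ R of the intervals [−tρ − q f(t,d)√(1 − ρ²), −tρ + q f(t,d)√(1 − ρ²)] equals exactly [−√(T² + q² f(T,d)²), √(T² + q² f(T,d)²)]. -/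
/-!
Write `b = q f(t,d)` and `s = √(1 - ρ²)`. By Cauchy–Schwarz for `(t, b)` and the unit vector
`(ρ, s)`, every endpoint `-tρ ± b s` has absolute value at most `√(t² + b²)`, which grows with
`|t|`; so every interval lies in `[-M, M]` with `M² = T² + q² f(T,d)²`. Conversely, for
`|x| ≤ M` take `t = T` and `ρ = -xT/M²`: the centre `-Tρ` is then `x` shifted by `x b²/M²`,
which the radius `b s` just covers, and `ρ² ≤ T²/M² < R`.
-/

open Real

theorem abs_mul_add_mul_sqrt_one_sub_sq_le (a b ρ : ℝ) (hρ : ρ ^ 2 ≤ 1) :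
    |a * ρ + b * √(1 - ρ ^ 2)| ≤ √(a ^ 2 + b ^ 2) := by
  have hs : √(1 - ρ ^ 2) ^ 2 = 1 - ρ ^ 2 := sq_sqrt (by linarith)
  refine abs_le_sqrt ?_
  nlinarith [sq_nonneg (a * √(1 - ρ ^ 2) - b * ρ)]

theorem Icc_sub_add_mul_sqrt_one_sub_sq_subset (a b ρ : ℝ) (hρ : ρ ^ 2 ≤ 1) :
    Set.Icc (-a * ρ - b * √(1 - ρ ^ 2)) (-a * ρ + b * √(1 - ρ ^ 2)) ⊆
      Set.Icc (-√(a ^ 2 + b ^ 2)) √(a ^ 2 + b ^ 2) := by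
  have h₁ := abs_le.1 (abs_mul_add_mul_sqrt_one_sub_sq_le a b ρ hρ)
  have h₂ := abs_le.1 (abs_mul_add_mul_sqrt_one_sub_sq_le (-a) b ρ hρ)
  rw [neg_sq] at h₂
  exact Set.Icc_subset_Icc (by linarith) (by linarith)

theorem exists_sq_le_mem_Icc_sub_add_mul_sqrt_one_sub_sq {a b x : ℝ} (hb : 0 < b)
    (hx : x ∈ Set.Icc (-√(a ^ 2 + b ^ 2)) √(a ^ 2 + b ^ 2)) :
    ∃ ρ, ρ ^ 2 ≤ a ^ 2 / (a ^ 2 + b ^ 2) ∧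
      x ∈ Set.Icc (-a * ρ - b * √(1 - ρ ^ 2)) (-a * ρ + b * √(1 - ρ ^ 2)) := by
  set M2 := a ^ 2 + b ^ 2
  have hM2_pos : 0 < M2 := by positivity
  have hx2 : x ^ 2 ≤ M2 := by
    simpa [sq_abs, sq_sqrt hM2_pos.le] using sq_le_sq' hx.1 hx.2
  set ρ := -(x * a) / M2 with hρ
  have hρ_le : ρ ^ 2 ≤ a ^ 2 / M2 := by
    rw [div_pow, div_le_div_iff₀ (by positivity) hM2_pos]
    nlinarith [mul_le_mul_of_nonneg_left hx2 (sq_nonneg a)]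
  have hρ_le_one : ρ ^ 2 ≤ 1 :=
    hρ_le.trans ((div_le_one hM2_pos).2 (le_add_of_nonneg_right (sq_nonneg b)))
  have hcentre : x - -a * ρ = x * b ^ 2 / M2 := by
    rw [hρ]; field_simp; ring
  have hradius : |x * b ^ 2 / M2| ≤ b * √(1 - ρ ^ 2) := by
    rw [show b * √(1 - ρ ^ 2) = √(b ^ 2 * (1 - ρ ^ 2)) by
      rw [sqrt_mul (sq_nonneg b), sqrt_sq hb.le]]
    refine abs_le_sqrt ?_
    rw [hρ]
    field_simp
    nlinarith
  refine ⟨ρ, hρ_le, ?_, ?_⟩ <;> linarith [abs_le.1 hradius]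

theorem sqrt_one_add_div_le_of_abs_le {c t T : ℝ} (hc : 0 ≤ c) (ht : |t| ≤ T) :
    √(1 + (1 + t ^ 2) / c) ≤ √(1 + (1 + T ^ 2) / c) := by
  have : t ^ 2 ≤ T ^ 2 := sq_le_sq' (abs_le.1 ht).1 (abs_le.1 ht).2
  gcongr

/-- sharpness: for real `d > 1`, `q > 0`, `T > 0`,
`f(t,d) := √(1 + (1 + t²)/(d − 1))` and `T²/(T² + q² f(T,d)²) < R < 1`, the union over
`|t| ≤ T` and `ρ² ≤ R` of the intervals
`[−tρ − q f(t,d)√(1 − ρ²), −tρ + q f(t,d)√(1 − ρ²)]` equals exactly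
`[−√(T² + q² f(T,d)²), √(T² + q² f(T,d)²)]`. -/
theorem stmt8 (d q T R : ℝ) (hd : 1 < d) (hq : 0 < q) (hT : 0 < T)
    (hR1 : T ^ 2 /
        (T ^ 2 + q ^ 2 * Real.sqrt (1 + (1 + T ^ 2) / (d - 1)) ^ 2) < R)
    (hR2 : R < 1) :
    (⋃ (t : ℝ) (ρ : ℝ) (_ : |t| ≤ T) (_ : ρ ^ 2 ≤ R),
        Set.Icc
          (-t * ρ - q * Real.sqrt (1 + (1 + t ^ 2) / (d - 1)) * Real.sqrt (1 - ρ ^ 2))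
          (-t * ρ + q * Real.sqrt (1 + (1 + t ^ 2) / (d - 1)) * Real.sqrt (1 - ρ ^ 2)))
      = Set.Icc
          (-Real.sqrt (T ^ 2 + q ^ 2 * Real.sqrt (1 + (1 + T ^ 2) / (d - 1)) ^ 2))
          (Real.sqrt (T ^ 2 + q ^ 2 * Real.sqrt (1 + (1 + T ^ 2) / (d - 1)) ^ 2)) := by
  simp only [← mul_pow] at hR1 ⊢
  apply Set.Subset.antisymm
  · simp only [Set.iUnion_subset_iff]
    intro t ρ ht hρ
    have hf := sqrt_one_add_div_le_of_abs_le (by linarith : (0 : ℝ) ≤ d - 1) ht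
    have ht2 : t ^ 2 ≤ T ^ 2 := sq_le_sq' (abs_le.1 ht).1 (abs_le.1 ht).2
    have hM : √(t ^ 2 + (q * √(1 + (1 + t ^ 2) / (d - 1))) ^ 2) ≤
        √(T ^ 2 + (q * √(1 + (1 + T ^ 2) / (d - 1))) ^ 2) := by
      gcongr
    exact (Icc_sub_add_mul_sqrt_one_sub_sq_subset _ _ ρ (by linarith)).trans
      (Set.Icc_subset_Icc (neg_le_neg hM) hM)
  · intro x hx
    obtain ⟨ρ, hρ, hxρ⟩ := exists_sq_le_mem_Icc_sub_add_mul_sqrt_one_sub_sq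
      (by positivity : 0 < q * √(1 + (1 + T ^ 2) / (d - 1))) hx
    simp only [Set.mem_iUnion]
    exact ⟨T, ρ, (abs_of_pos hT).le, hρ.trans hR1.le, hxρ⟩
end

section
/- Let W be an n×k matrix of rank k > 1 whose columns, together with span(X,Z), span a subspace on which all quantities below are defined; suppose σ_{y·zx} > 0, σ_{z·x} > 0, σ_{z·xw} > 0 (t_W² finite), and df + 1 − k > 0. Define F_W := [(σ²_{z·x} − σ²_{z·xw})/k] / [σ²_{z·xw}/(df + 1 − k)], t_W := √(k·df/(df + 1 − k) · F_W), and ρ²_{yw·zx} := 1 − σ²_{y·zxw}/σ²_{y·zx}. Then the Z-coefficients b̂ (regression of Y on (X,Z)) and β̂ (regression of Y on (X,Z,W)) satisfy |b̂ − β̂| ≤ SE(b̂) · t_W · |ρ_{yw·zx}|, equivalently (b̂ − β̂)² ≤ V̂(b̂) · [k·df/(df + 1 − k)] · F_W · ρ²_{yw·zx}. -/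
/-!
Let `u`, `v` be the residuals of `Z` on `X` and on `(X, W)`, and `f` the difference of the fitted
values of `Y` on `(X, Z, W)` and on `(X, Z)`. Orthogonality of residuals gives `(f, u) = 0`,
`(f, v) = (β̂ - b̂) σ²_{z·xw}` and `(u, v) = σ²_{z·xw}`, so Cauchy–Schwarz applied to `f` and
`σ²_{z·x} v - σ²_{z·xw} u` yields
`σ²_{z·x} σ²_{z·xw} (b̂ - β̂)² ≤ ‖f‖² (σ²_{z·x} - σ²_{z·xw})`.
By Pythagoras `‖f‖² = σ²_{y·zx} - σ²_{y·zxw} = ρ²_{yw·zx} σ²_{y·zx}`, and the right-hand side of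
the theorem is exactly `‖f‖² (σ²_{z·x} - σ²_{z·xw}) / (σ²_{z·x} σ²_{z·xw})`.
-/

open scoped BigOperators

open Submodule Set

namespace LinearMap.BilinForm

variable {R M : Type*} [CommRing R] [AddCommGroup M] [Module R M] {B : LinearMap.BilinForm R M}

def IsOrthProj (B : LinearMap.BilinForm R M) (S : Submodule R M) (A P : M) : Prop :=
  P ∈ S ∧ ∀ v ∈ S, B (A - P) v = 0

namespace IsOrthProj

variable {S T : Submodule R M} {A P Q : M}

lemma apply_self (hP : B.IsOrthProj S A P) : B (A - P) A = B (A - P) (A - P) := by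
  rw [sub_right, hP.2 P hP.1, sub_zero]

lemma apply_sub_of_le (hP : B.IsOrthProj T A P) (hQ : B.IsOrthProj S A Q) (hST : S ≤ T) :
    B (A - P) (A - Q) = B (A - P) (A - P) := by
  rw [show A - Q = (A - P) + (P - Q) by abel, add_right,
    hP.2 _ (sub_mem hP.1 (hST hQ.1)), add_zero]

lemma pythagorean_of_le (hB : B.IsSymm) (hP : B.IsOrthProj T A P) (hQ : B.IsOrthProj S A Q)
    (hST : S ≤ T) : B (A - Q) (A - Q) = B (A - P) (A - P) + B (P - Q) (P - Q) := by
  have hPQ : B (A - P) (P - Q) = 0 := hP.2 _ (sub_mem hP.1 (hST hQ.1))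
  rw [show A - Q = (A - P) + (P - Q) by abel, add_left, add_right, add_right, hPQ,
    hB.eq (P - Q), hPQ]
  ring

variable [LinearOrder R] [IsStrictOrderedRing R]

lemma apply_le_of_le (hB : B.IsPosSemidef) (hP : B.IsOrthProj T A P) (hQ : B.IsOrthProj S A Q)
    (hST : S ≤ T) : B (A - P) (A - P) ≤ B (A - Q) (A - Q) := by
  rw [hP.pythagorean_of_le hB.isSymm hQ hST]
  exact le_add_of_nonneg_right (hB.isNonneg.nonneg _)

theorem mul_mul_coeff_sub_sq_le (hB : B.IsPosSemidef) (hST : S ≤ T)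
    {Z Y Pzs Pzt Pys Pyt : M} {β β' : R}
    (hzs : B.IsOrthProj S Z Pzs) (hzt : B.IsOrthProj T Z Pzt)
    (hys : B.IsOrthProj (R ∙ Z ⊔ S) Y Pys) (hyt : B.IsOrthProj (R ∙ Z ⊔ T) Y Pyt)
    (hβ : Pys - β • Z ∈ S) (hβ' : Pyt - β' • Z ∈ T) :
    B (Z - Pzs) (Z - Pzs) * B (Z - Pzt) (Z - Pzt) * (β - β') ^ 2
      ≤ B (Pyt - Pys) (Pyt - Pys) * (B (Z - Pzs) (Z - Pzs) - B (Z - Pzt) (Z - Pzt)) := by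
  have hs := hB.isNonneg.nonneg
  have hsym := hB.isSymm.eq
  set u := Z - Pzs
  set v := Z - Pzt
  set a := B u u
  set b := B v v
  have hvu : B v u = b := hzt.apply_sub_of_le hzs hST
  have hvZ : B v Z = b := hzt.apply_self
  have hu : u ∈ R ∙ Z ⊔ S :=
    sub_mem (mem_sup_left (mem_span_singleton_self Z)) (mem_sup_right hzs.1)
  have hfu : B (Pyt - Pys) u = 0 := by
    rw [show Pyt - Pys = (Y - Pys) - (Y - Pyt) by abel, sub_left, hys.2 u hu,
      hyt.2 u (sup_le_sup_left hST _ hu), sub_zero]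
  have hfv : B (Pyt - Pys) v = (β' - β) * b := by
    rw [show Pyt - Pys = (Pyt - β' • Z) - (Pys - β • Z) + (β' - β) • Z by module, hsym,
      add_right, sub_right, hzt.2 _ hβ', hzt.2 _ (hST hβ), smul_right, hvZ]
    ring
  have hab : 0 ≤ a - b := sub_nonneg.2 (hzt.apply_le_of_le hB hzs hST)
  have hcs := apply_sq_le_of_symm B hs (isSymm_iff.1 hB.isSymm) (Pyt - Pys) (a • v - b • u)
  have hfe : B (Pyt - Pys) (a • v - b • u) = a * b * (β' - β) := by
    rw [sub_right, smul_right, smul_right, hfu, hfv]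
    ring
  have hee : B (a • v - b • u) (a • v - b • u) = a * b * (a - b) := by
    simp only [sub_left, sub_right, smul_left, smul_right, hvu, hsym u v]
    ring
  rw [hfe, hee] at hcs
  rcases (mul_nonneg (hs u) (hs v)).eq_or_lt with h0 | hpos
  · rw [← h0, zero_mul]
    exact mul_nonneg (hs _) hab
  · nlinarith

end IsOrthProj

end LinearMap.BilinForm

section WeightedInnerProduct

variable {n : ℕ} (w : Fin n → ℝ)

noncomputable def wipForm : LinearMap.BilinForm ℝ (Fin n → ℝ) :=
  LinearMap.mk₂ ℝ (wip w)
    (fun A B C => by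
      simp only [wip, Pi.add_apply, mul_add, add_mul, Finset.sum_add_distrib, add_div])
    (fun c A B => by
      rw [wip, wip, smul_eq_mul, mul_div_assoc', Finset.mul_sum]
      exact congrArg (· / _) (Finset.sum_congr rfl fun i _ => by
        simp only [Pi.smul_apply, smul_eq_mul]; ring))
    (fun A B C => by simp only [wip, Pi.add_apply, mul_add, Finset.sum_add_distrib, add_div])
    (fun c A B => by
      rw [wip, wip, smul_eq_mul, mul_div_assoc', Finset.mul_sum]
      exact congrArg (· / _) (Finset.sum_congr rfl fun i _ => by
        simp only [Pi.smul_apply, smul_eq_mul]; ring))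

@[simp]
lemma wipForm_apply (A B : Fin n → ℝ) : wipForm w A B = wip w A B := rfl

lemma wipForm_isPosSemidef (hw : ∀ i, 0 ≤ w i) : (wipForm w).IsPosSemidef where
  isSymm := ⟨fun A B => by simp only [wipForm_apply, wip, mul_right_comm]⟩
  isNonneg := ⟨fun A => div_nonneg
    (Finset.sum_nonneg fun i _ => by rw [mul_assoc]; exact mul_nonneg (hw i) (mul_self_nonneg _))
    (Finset.sum_nonneg fun i _ => hw i)⟩

lemma IsBlp.isOrthProj {C : Set (Fin n → ℝ)} {A P : Fin n → ℝ} (h : IsBlp w C A P) :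
    (wipForm w).IsOrthProj (span ℝ C) A P :=
  h

end WeightedInnerProduct

theorem stmt9_general {n k : ℕ} (hk : 1 < k) (w : Fin n → ℝ) (hw : ∀ i, 0 < w i)
    (X : Set (Fin n → ℝ))
    (Y Z : Fin n → ℝ) (W : Fin k → (Fin n → ℝ))
    (Pzx Pzxw Pyzx Pyzxw : Fin n → ℝ)
    (hPzx : IsBlp w X Z Pzx)
    (hPzxw : IsBlp w (X ∪ Set.range W) Z Pzxw)
    (hPyzx : IsBlp w (insert Z X) Y Pyzx)
    (hPyzxw : IsBlp w (insert Z (X ∪ Set.range W)) Y Pyzxw)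
    (bhat betahat : ℝ) (delta : Fin k → ℝ)
    (hb : Pyzx - bhat • Z ∈ Submodule.span ℝ X)
    (hbeta : Pyzxw - betahat • Z - (∑ i, delta i • W i) ∈ Submodule.span ℝ X)
    (hσyzx : 0 < wip w (Y - Pyzx) (Y - Pyzx))
    (hσzx : 0 < wip w (Z - Pzx) (Z - Pzx))
    (hσzxw : 0 < wip w (Z - Pzxw) (Z - Pzxw))
    (hdfk : 0 < (n : ℝ) - (Module.finrank ℝ (Submodule.span ℝ X) : ℝ) - 1 + 1 - k) :
    let df : ℝ := (n : ℝ) - (Module.finrank ℝ (Submodule.span ℝ X) : ℝ) - 1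
    let s2zx := wip w (Z - Pzx) (Z - Pzx)
    let s2zxw := wip w (Z - Pzxw) (Z - Pzxw)
    let FW := ((s2zx - s2zxw) / k) / (s2zxw / (df + 1 - k))
    let tW := Real.sqrt (k * df / (df + 1 - k) * FW)
    let rho2 := 1 - wip w (Y - Pyzxw) (Y - Pyzxw) / wip w (Y - Pyzx) (Y - Pyzx)
    let SEb := Real.sqrt (wip w (Y - Pyzx) (Y - Pyzx)) / (Real.sqrt df * Real.sqrt s2zx)
    |bhat - betahat| ≤ SEb * tW * Real.sqrt rho2 ∧
    (bhat - betahat) ^ 2 ≤ SEb ^ 2 * (k * df / (df + 1 - k)) * FW * rho2 := by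
  intro df s2zx s2zxw FW tW rho2 SEb
  have hB := wipForm_isPosSemidef w fun i => (hw i).le
  have hXW : span ℝ X ≤ span ℝ (X ∪ range W) := span_mono subset_union_left
  have hW : ∑ i, delta i • W i ∈ span ℝ (X ∪ range W) :=
    Submodule.sum_mem _ fun i _ => smul_mem _ _ (subset_span (mem_union_right _ (mem_range_self i)))
  have hcoef := hPzx.isOrthProj.mul_mul_coeff_sub_sq_le hB hXW hPzxw.isOrthProj
    (span_insert (R := ℝ) Z X ▸ hPyzx.isOrthProj)
    (span_insert (R := ℝ) Z (X ∪ range W) ▸ hPyzxw.isOrthProj)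
    hb (by simpa only [sub_add_cancel] using add_mem (hXW hbeta) hW)
  have hY := hPyzxw.isOrthProj.pythagorean_of_le hB.isSymm hPyzx.isOrthProj
    (span_mono (insert_subset_insert subset_union_left))
  have hZ := hPzxw.isOrthProj.apply_le_of_le hB hPzx.isOrthProj hXW
  simp only [wipForm_apply] at hcoef hY hZ
  have hk1 : (1 : ℝ) < k := by exact_mod_cast hk
  have hdf : 0 < df := by linarith
  have hdfk' : df + 1 - k ≠ 0 := hdfk.ne'
  have hrho : rho2 = wip w (Pyzxw - Pyzx) (Pyzxw - Pyzx) / wip w (Y - Pyzx) (Y - Pyzx) := by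
    simp only [rho2]
    field_simp
    linarith
  have hFW : 0 ≤ FW := div_nonneg (div_nonneg (sub_nonneg.2 hZ) (by positivity)) (by positivity)
  have hsq : (bhat - betahat) ^ 2 ≤ SEb ^ 2 * (k * df / (df + 1 - k)) * FW * rho2 := by
    have hrhs : SEb ^ 2 * (k * df / (df + 1 - k)) * FW * rho2
        = wip w (Pyzxw - Pyzx) (Pyzxw - Pyzx) * (s2zx - s2zxw) / (s2zx * s2zxw) := by
      simp only [SEb, FW, hrho, div_pow, mul_pow, Real.sq_sqrt hσyzx.le, Real.sq_sqrt hdf.le,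
        Real.sq_sqrt (show 0 ≤ s2zx from hσzx.le)]
      field_simp
    rw [hrhs, le_div_iff₀ (by positivity)]
    linarith
  refine ⟨abs_le_of_sq_le_sq ?_ (by positivity), hsq⟩
  have hK : 0 ≤ k * df / (df + 1 - k) := div_nonneg (by positivity) hdfk.le
  have hrho2 : 0 ≤ rho2 := hrho ▸ div_nonneg (hB.isNonneg.nonneg _) hσyzx.le
  rwa [mul_pow, mul_pow, Real.sq_sqrt (mul_nonneg hK hFW), Real.sq_sqrt hrho2, ← mul_assoc]

/-- Corollary for multivariate `W`: for an `n×k` matrix `W` of rank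
`k > 1` (columns `W 0, …, W (k−1)`, not collinear with `X`), if `σ_{y·zx} > 0`,
`σ_{z·x} > 0`, `σ_{z·xw} > 0` and `df + 1 − k > 0`, then with
`F_W := [(σ²_{z·x} − σ²_{z·xw})/k]/[σ²_{z·xw}/(df+1−k)]`,
`t_W := √(k·df/(df+1−k)·F_W)` and `ρ²_{yw·zx} := 1 − σ²_{y·zxw}/σ²_{y·zx}`,
`|b̂ − β̂| ≤ SE(b̂)·t_W·|ρ_{yw·zx}|`, equivalently
`(b̂ − β̂)² ≤ V̂(b̂)·[k·df/(df+1−k)]·F_W·ρ²_{yw·zx}`. -/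
theorem stmt9 {n k : ℕ} (hk : 1 < k) (w : Fin n → ℝ) (hw : ∀ i, 0 < w i)
    (X : Set (Fin n → ℝ)) (hXfin : X.Finite)
    (h1 : (fun _ => (1 : ℝ)) ∈ Submodule.span ℝ X)
    (Y Z : Fin n → ℝ) (W : Fin k → (Fin n → ℝ))
    (hWrank : LinearIndependent ℝ W)
    (hWX : Module.finrank ℝ (Submodule.span ℝ (X ∪ Set.range W))
        = Module.finrank ℝ (Submodule.span ℝ X) + k)
    (Pzx Pzxw Pyzx Pyzxw : Fin n → ℝ)
    (hPzx : IsBlp w X Z Pzx)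
    (hPzxw : IsBlp w (X ∪ Set.range W) Z Pzxw)
    (hPyzx : IsBlp w (insert Z X) Y Pyzx)
    (hPyzxw : IsBlp w (insert Z (X ∪ Set.range W)) Y Pyzxw)
    (bhat betahat : ℝ) (delta : Fin k → ℝ)
    (hb : Pyzx - bhat • Z ∈ Submodule.span ℝ X)
    (hbeta : Pyzxw - betahat • Z - (∑ i, delta i • W i) ∈ Submodule.span ℝ X)
    (hσyzx : 0 < wip w (Y - Pyzx) (Y - Pyzx))
    (hσzx : 0 < wip w (Z - Pzx) (Z - Pzx))
    (hσzxw : 0 < wip w (Z - Pzxw) (Z - Pzxw))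
    (hdfk : 0 < (n : ℝ) - (Module.finrank ℝ (Submodule.span ℝ X) : ℝ) - 1 + 1 - k) :
    let df : ℝ := (n : ℝ) - (Module.finrank ℝ (Submodule.span ℝ X) : ℝ) - 1
    let s2zx := wip w (Z - Pzx) (Z - Pzx)
    let s2zxw := wip w (Z - Pzxw) (Z - Pzxw)
    let FW := ((s2zx - s2zxw) / k) / (s2zxw / (df + 1 - k))
    let tW := Real.sqrt (k * df / (df + 1 - k) * FW)
    let rho2 := 1 - wip w (Y - Pyzxw) (Y - Pyzxw) / wip w (Y - Pyzx) (Y - Pyzx)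
    let SEb := Real.sqrt (wip w (Y - Pyzx) (Y - Pyzx)) / (Real.sqrt df * Real.sqrt s2zx)
    |bhat - betahat| ≤ SEb * tW * Real.sqrt rho2 ∧
    (bhat - betahat) ^ 2 ≤ SEb ^ 2 * (k * df / (df + 1 - k)) * FW * rho2 :=
  stmt9_general hk w hw X Y Z W Pzx Pzxw Pyzx Pyzxw hPzx hPzxw hPyzx hPyzxw bhat betahat delta hb
    hbeta hσyzx hσzx hσzxw hdfk
end
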